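/- arXiv:1906.05751 — 2 statements merged into one kernel-verified Lean document; each statement's English description precedes it below -/
import Mathlib

section
/- Let a(z), b(z) be local logarithmic fields on W (with a also local with itself). Then for all n ∈ ℤ: (i) (D_z a)_{(n)} b = −n · a_{(n−1)} b; (ii) D_z (a_{(n)} b) = (D_z a)_{(n)} b + a_{(n)} (D_z b); (iii) ∂_ℓ (a_{(n)} b) = (∂_ℓ a)_{(n)} b + a_{(n)} (∂_ℓ b). -/
variable {W : Type*} [AddCommGroup W] [Module ℂ W]

variable (W) in
/-- The data of a logarithmic field `a(z) = Σ_μ Σ_j a_{μ,j} z^{−μ} ℓ^j` on `W`, recorded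
pointwise: the value at `(μ, j, w)` is the coefficient of `z^{−μ} ℓ^j` applied to `w`
(here `ℓ` plays the role of `log z`). -/
abbrev LogFieldData : Type _ := ℂ → ℕ → W → W

/-- `a` is a logarithmic field: its coefficients are linear, it is polynomial in `ℓ`, its
`z`-exponents lie in finitely many cosets of `ℤ` in `ℂ`, and for each vector `w` and each
coset the coefficients `a_{α+k,·}` annihilate `w` for all sufficiently large `k`. -/
def IsLogField (a : LogFieldData W) : Prop :=
  (∀ (μ : ℂ) (j : ℕ), IsLinearMap ℂ (a μ j)) ∧
  (∀ μ : ℂ, ∃ J : ℕ, ∀ j : ℕ, J ≤ j → a μ j = 0) ∧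
  (∃ A : Finset ℂ, ∀ μ : ℂ, a μ ≠ 0 → ∃ α ∈ A, ∃ k : ℤ, μ = α + (k : ℂ)) ∧
  (∀ (w : W) (α : ℂ), ∃ N : ℤ, ∀ k : ℤ, N ≤ k → ∀ j : ℕ, a (α + (k : ℂ)) j w = 0)

/-- `(z₁−z₂)^N [a(z₁), b(z₂)] = 0`, written coefficientwise (coefficient of
`z₁^{−μ₁} ℓ₁^{j₁} z₂^{−μ₂} ℓ₂^{j₂}`), pointwise on `W`. -/
def IsLocalOrd (a b : LogFieldData W) (N : ℕ) : Prop :=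
  ∀ (μ₁ : ℂ) (j₁ : ℕ) (μ₂ : ℂ) (j₂ : ℕ) (w : W),
    ∑ i ∈ Finset.range (N + 1), ((-1 : ℤ) ^ i * (N.choose i : ℤ)) •
      (a (μ₁ + ((N : ℂ) - (i : ℂ))) j₁ (b (μ₂ + (i : ℂ)) j₂ w)
        - b (μ₂ + (i : ℂ)) j₂ (a (μ₁ + ((N : ℂ) - (i : ℂ))) j₁ w)) = 0

/-- Two logarithmic fields are local if `(z₁−z₂)^N [a(z₁), b(z₂)] = 0` for some `N`. -/
def IsLocal (a b : LogFieldData W) : Prop := ∃ N : ℕ, IsLocalOrd a b N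

/-- The derivation `D_z = ∂_z + z^{−1} ∂_ℓ`, coefficientwise. -/
noncomputable def Dz (a : LogFieldData W) : LogFieldData W := fun μ j w =>
  ((j : ℂ) + 1) • a (μ - 1) (j + 1) w - (μ - 1) • a (μ - 1) j w

/-- The derivation `D_ℓ = z ∂_z + ∂_ℓ`, coefficientwise. -/
noncomputable def Dl (a : LogFieldData W) : LogFieldData W := fun μ j w =>
  ((j : ℂ) + 1) • a μ (j + 1) w - μ • a μ j w

/-- The derivation `∂_ℓ`, coefficientwise. -/
noncomputable def Del (a : LogFieldData W) : LogFieldData W := fun μ j w =>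
  ((j : ℂ) + 1) • a μ (j + 1) w

/-- The coefficient of `z₁^{−μ₁} ℓ₁^{j₁} z₂^{−μ₂} ℓ₂^{j₂}` of `(z₁−z₂)^N a(z₁) b(z₂)`,
pointwise on `W`. -/
noncomputable def prodCoeff (a b : LogFieldData W) (N : ℕ) :
    ℂ → ℕ → ℂ → ℕ → W → W := fun μ₁ j₁ μ₂ j₂ w =>
  ∑ i ∈ Finset.range (N + 1), ((-1 : ℤ) ^ i * (N.choose i : ℤ)) •
    a (μ₁ + ((N : ℂ) - (i : ℂ))) j₁ (b (μ₂ + (i : ℂ)) j₂ w)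

/-- The derivation `D_{z₁}` on two-variable coefficient data. -/
noncomputable def Dz1 (G : ℂ → ℕ → ℂ → ℕ → W → W) :
    ℂ → ℕ → ℂ → ℕ → W → W := fun μ₁ j₁ μ₂ j₂ w =>
  ((j₁ : ℂ) + 1) • G (μ₁ - 1) (j₁ + 1) μ₂ j₂ w - (μ₁ - 1) • G (μ₁ - 1) j₁ μ₂ j₂ w

/-- Restriction of two-variable coefficient data to the diagonal `z₁ = z₂ = z`,
`ℓ₁ = ℓ₂ = ℓ` (for fixed `w` and fixed total exponents, this is a finite sum in the
intended applications; it is computed here by `finsum`). -/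
noncomputable def diagS (G : ℂ → ℕ → ℂ → ℕ → W → W) : LogFieldData W := fun μ j w =>
  ∑ j₁ ∈ Finset.range (j + 1), ∑ᶠ μ₁ : ℂ, G μ₁ j₁ (μ - μ₁) (j - j₁) w

/-- The `n`-th product with respect to a locality order `N`:
`(a_{(n)} b)(z) w = D_{z₁}^{(N−n−1)} ((z₁−z₂)^N a(z₁) b(z₂) w)|_{z₁=z₂=z, ℓ₁=ℓ₂=ℓ}` for
`n < N`, and `0` for `n ≥ N`, where `D^{(k)} = D^k / k!`. -/
noncomputable def nProductAux (a b : LogFieldData W) (N : ℕ) (n : ℤ) : LogFieldData W :=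
  if (N : ℤ) ≤ n then 0 else
    (((N - n - 1).toNat.factorial : ℂ))⁻¹ • diagS (Dz1^[(N - n - 1).toNat] (prodCoeff a b N))

/-- The `n`-th product of two local logarithmic fields, computed with the least
admissible locality order (the result is independent of the admissible order). -/
noncomputable def nProduct (a b : LogFieldData W) (n : ℤ) : LogFieldData W :=
  nProductAux a b (sInf {N : ℕ | IsLocalOrd a b N}) n

/-!
Write `T = a(z₁) b(z₂)` and `t = z₁ - z₂`, so that `a_{(n)} b` is the restriction to the diagonal
of `D_{z₁}^{(k)} (t^N T)` with `k = N - n - 1`. Restriction to the diagonal kills multiples of `t`,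
and `[D_{z₁}, t] = 1` gives `D_{z₁}^{k+1} t = t D_{z₁}^{k+1} + (k + 1) D_{z₁}^k`; together these
show that the product does not depend on the locality order `N`, and, since
`t^{N+1} D_{z₁} = D_{z₁} t^{N+1} - (N + 1) t^N`, they give (i). For (ii) and (iii), the total
derivations `D_{z₁} + D_{z₂}` and `∂_{ℓ₁} + ∂_{ℓ₂}` commute with `t` and with `D_{z₁}`, and on the
diagonal they become `D_z` and `∂_ℓ`.
-/

open Finset Function

theorem pow_succ_mul_eq_of_mul_eq_add {R : Type*} [Ring R] {x y c : R} (h : x * y = y * x + c)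
    (hc : Commute x c) (n : ℕ) :
    x ^ (n + 1) * y = y * x ^ (n + 1) + (n + 1) • (c * x ^ n) := by
  induction n with
  | zero => simpa using h
  | succ n ih =>
    calc x ^ (n + 2) * y = x * (x ^ (n + 1) * y) := by rw [pow_succ' x (n + 1), mul_assoc]
      _ = (x * y) * x ^ (n + 1) + (n + 1) • (x * c * x ^ n) := by
        rw [ih, mul_add, mul_smul_comm, mul_assoc, mul_assoc]
      _ = y * x ^ (n + 2) + (n + 2) • (c * x ^ (n + 1)) := by
        rw [h, hc.eq, add_mul, mul_assoc y, mul_assoc c, ← pow_succ', ← pow_succ',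
          succ_nsmul _ (n + 1)]
        abel

lemma sum_range_succ_alternating_choose_smul {M : Type*} [AddCommGroup M] (f : ℕ → M) (N : ℕ) :
    ∑ i ∈ range (N + 2), ((-1 : ℤ) ^ i * ((N + 1).choose i : ℤ)) • f i =
      ∑ i ∈ range (N + 1), ((-1 : ℤ) ^ i * (N.choose i : ℤ)) • (f i - f (i + 1)) := by
  have pascal : ∀ i, (-1 : ℤ) ^ (i + 1) * ((N + 1).choose (i + 1) : ℤ) =
      (-1) ^ (i + 1) * (N.choose (i + 1) : ℤ) - (-1) ^ i * (N.choose i : ℤ) := by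
    intro i
    rw [Nat.choose_succ_succ]
    push_cast
    ring
  have extend : ∑ i ∈ range (N + 1), ((-1 : ℤ) ^ i * (N.choose i : ℤ)) • f i =
      ∑ i ∈ range (N + 2), ((-1 : ℤ) ^ i * (N.choose i : ℤ)) • f i := by
    rw [sum_range_succ _ (N + 1), Nat.choose_succ_self, Nat.cast_zero, mul_zero, zero_smul,
      add_zero]
  simp only [smul_sub, sum_sub_distrib]
  rw [extend, sum_range_succ' _ (N + 1), sum_range_succ' _ (N + 1)]
  simp only [pascal, sub_smul, sum_sub_distrib, Nat.choose_zero_right]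
  abel

lemma smul_sum_antidiagonal_succ {R M : Type*} [Semiring R] [AddCommMonoid M] [Module R M]
    (A : ℕ → ℕ → M) (j : ℕ) :
    ((j : R) + 1) • ∑ x ∈ antidiagonal (j + 1), A x.1 x.2 =
      ∑ x ∈ antidiagonal j,
        (((x.1 : R) + 1) • A (x.1 + 1) x.2 + ((x.2 : R) + 1) • A x.1 (x.2 + 1)) := by
  have split : ∀ x ∈ antidiagonal (j + 1),
      ((j : R) + 1) • A x.1 x.2 = (x.1 : R) • A x.1 x.2 + (x.2 : R) • A x.1 x.2 := by
    intro x hx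
    rw [HasAntidiagonal.mem_antidiagonal] at hx
    rw [← add_smul, ← Nat.cast_add, hx, Nat.cast_succ]
  rw [smul_sum, sum_congr rfl split, sum_add_distrib, Nat.sum_antidiagonal_succ,
    Nat.sum_antidiagonal_succ']
  simp [sum_add_distrib]

lemma finsum_comp_add_right {α M : Type*} [AddGroup α] [AddCommMonoid M] (f : α → M) (c : α) :
    ∑ᶠ x, f (x + c) = ∑ᶠ x, f x :=
  finsum_comp_equiv (Equiv.addRight c)

lemma inv_factorial_succ_mul {K : Type*} [Field K] [CharZero K] (k : ℕ) :
    (((k + 1).factorial : K))⁻¹ * ((k : K) + 1) = ((k.factorial : K))⁻¹ := by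
  rw [Nat.factorial_succ, Nat.cast_mul, Nat.cast_succ, mul_inv, mul_comm, ← mul_assoc,
    mul_inv_cancel₀ (Nat.cast_add_one_ne_zero k), one_mul]

-- Coefficient data of a field `G(z₁, z₂)`, indexed as in `prodCoeff`.
variable (W) in
abbrev LogFieldData₂ : Type _ := ℂ → ℕ → ℂ → ℕ → W → W

local notation "End₂" => Module.End ℂ (LogFieldData₂ W)

section Operators

-- Multiplication by `z₁ - z₂`: the coefficient of `z^{-μ}` in `z f` is that of `z^{-μ-1}` in `f`.
noncomputable def mulDiff : End₂ where
  toFun G μ₁ j₁ μ₂ j₂ w := G (μ₁ + 1) j₁ μ₂ j₂ w - G μ₁ j₁ (μ₂ + 1) j₂ w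
  map_add' G G' := by funext μ₁ j₁ μ₂ j₂ w; simp only [Pi.add_apply]; abel
  map_smul' c G := by
    funext μ₁ j₁ μ₂ j₂ w; simp only [Pi.smul_apply, RingHom.id_apply, smul_sub]

noncomputable def Dz1ₗ : End₂ where
  toFun := Dz1
  map_add' G G' := by funext μ₁ j₁ μ₂ j₂ w; simp only [Dz1, Pi.add_apply]; module
  map_smul' c G := by
    funext μ₁ j₁ μ₂ j₂ w; simp only [Dz1, Pi.smul_apply, RingHom.id_apply]; module

noncomputable def Dz2 : End₂ where
  toFun G μ₁ j₁ μ₂ j₂ w :=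
    ((j₂ : ℂ) + 1) • G μ₁ j₁ (μ₂ - 1) (j₂ + 1) w - (μ₂ - 1) • G μ₁ j₁ (μ₂ - 1) j₂ w
  map_add' G G' := by funext μ₁ j₁ μ₂ j₂ w; simp only [Pi.add_apply]; module
  map_smul' c G := by
    funext μ₁ j₁ μ₂ j₂ w; simp only [Pi.smul_apply, RingHom.id_apply]; module

noncomputable def Del1 : End₂ where
  toFun G μ₁ j₁ μ₂ j₂ w := ((j₁ : ℂ) + 1) • G μ₁ (j₁ + 1) μ₂ j₂ w
  map_add' G G' := by funext μ₁ j₁ μ₂ j₂ w; simp only [Pi.add_apply, smul_add]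
  map_smul' c G := by
    funext μ₁ j₁ μ₂ j₂ w; simp only [Pi.smul_apply, RingHom.id_apply]; module

noncomputable def Del2 : End₂ where
  toFun G μ₁ j₁ μ₂ j₂ w := ((j₂ : ℂ) + 1) • G μ₁ j₁ μ₂ (j₂ + 1) w
  map_add' G G' := by funext μ₁ j₁ μ₂ j₂ w; simp only [Pi.add_apply, smul_add]
  map_smul' c G := by
    funext μ₁ j₁ μ₂ j₂ w; simp only [Pi.smul_apply, RingHom.id_apply]; module

variable (G : LogFieldData₂ W) (μ₁ : ℂ) (j₁ : ℕ) (μ₂ : ℂ) (j₂ : ℕ) (w : W)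

lemma mulDiff_apply :
    mulDiff G μ₁ j₁ μ₂ j₂ w = G (μ₁ + 1) j₁ μ₂ j₂ w - G μ₁ j₁ (μ₂ + 1) j₂ w :=
  rfl

lemma Dz1ₗ_apply : Dz1ₗ G = Dz1 G := rfl

lemma Dz1ₗ_pow_apply (k : ℕ) : (Dz1ₗ ^ k) G = Dz1^[k] G := Module.End.pow_apply _ _ _

lemma Dz2_apply : Dz2 G μ₁ j₁ μ₂ j₂ w =
    ((j₂ : ℂ) + 1) • G μ₁ j₁ (μ₂ - 1) (j₂ + 1) w - (μ₂ - 1) • G μ₁ j₁ (μ₂ - 1) j₂ w :=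
  rfl

lemma Del1_apply : Del1 G μ₁ j₁ μ₂ j₂ w = ((j₁ : ℂ) + 1) • G μ₁ (j₁ + 1) μ₂ j₂ w := rfl

lemma Del2_apply : Del2 G μ₁ j₁ μ₂ j₂ w = ((j₂ : ℂ) + 1) • G μ₁ j₁ μ₂ (j₂ + 1) w := rfl

lemma Dz_smul (c : ℂ) (f : LogFieldData W) : Dz (c • f) = c • Dz f := by
  funext μ j w
  simp only [Dz, Pi.smul_apply]
  module

lemma Del_smul (c : ℂ) (f : LogFieldData W) : Del (c • f) = c • Del f := by
  funext μ j w
  simp only [Del, Pi.smul_apply]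
  module

end Operators

section Commutation

lemma Dz1ₗ_mul_mulDiff : (Dz1ₗ : End₂) * mulDiff = mulDiff * Dz1ₗ + 1 := by
  ext G μ₁ j₁ μ₂ j₂ w
  simp only [Module.End.mul_apply, LinearMap.add_apply, Module.End.one_apply, Dz1ₗ_apply,
    mulDiff_apply, Dz1, Pi.add_apply, sub_add_cancel, add_sub_cancel_right]
  module

lemma mulDiff_mul_Dz2 : (mulDiff : End₂) * Dz2 = Dz2 * mulDiff + 1 := by
  ext G μ₁ j₁ μ₂ j₂ w
  simp only [Module.End.mul_apply, LinearMap.add_apply, Module.End.one_apply, Pi.add_apply,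
    Dz2_apply, mulDiff_apply, sub_add_cancel, add_sub_cancel_right]
  module

lemma commute_Dz_mulDiff : Commute (Dz1ₗ + Dz2 : End₂) mulDiff := by
  rw [commute_iff_eq, add_mul, mul_add, Dz1ₗ_mul_mulDiff, mulDiff_mul_Dz2]
  abel

lemma commute_Del1_mulDiff : Commute (Del1 : End₂) mulDiff := by
  rw [commute_iff_eq]
  ext G μ₁ j₁ μ₂ j₂ w
  simp only [Module.End.mul_apply, Del1_apply, mulDiff_apply, smul_sub]

lemma commute_Del2_mulDiff : Commute (Del2 : End₂) mulDiff := by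
  rw [commute_iff_eq]
  ext G μ₁ j₁ μ₂ j₂ w
  simp only [Module.End.mul_apply, Del2_apply, mulDiff_apply, smul_sub]

lemma commute_Dz_Dz1ₗ : Commute (Dz1ₗ + Dz2 : End₂) Dz1ₗ := by
  refine (Commute.refl _).add_left ?_
  rw [commute_iff_eq]
  ext G μ₁ j₁ μ₂ j₂ w
  simp only [Module.End.mul_apply, Dz1ₗ_apply, Dz2_apply, Dz1]
  module

lemma commute_Del_Dz1ₗ : Commute (Del1 + Del2 : End₂) Dz1ₗ := by
  rw [commute_iff_eq]
  ext G μ₁ j₁ μ₂ j₂ w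
  simp only [Module.End.mul_apply, LinearMap.add_apply, Dz1ₗ_apply, Del1_apply, Del2_apply, Dz1,
    Pi.add_apply]
  push_cast
  module

lemma Dz1ₗ_pow_succ_mul_mulDiff (k : ℕ) :
    (Dz1ₗ : End₂) ^ (k + 1) * mulDiff = mulDiff * Dz1ₗ ^ (k + 1) + (k + 1) • Dz1ₗ ^ k := by
  simpa using pow_succ_mul_eq_of_mul_eq_add Dz1ₗ_mul_mulDiff (Commute.one_right (Dz1ₗ : End₂)) k

lemma mulDiff_pow_succ_mul_Dz2 (N : ℕ) :
    (mulDiff : End₂) ^ (N + 1) * Dz2 = Dz2 * mulDiff ^ (N + 1) + (N + 1) • mulDiff ^ N := by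
  simpa using pow_succ_mul_eq_of_mul_eq_add mulDiff_mul_Dz2 (Commute.one_right (mulDiff : End₂)) N

lemma mulDiff_pow_succ_mul_Dz1ₗ (N : ℕ) :
    (mulDiff : End₂) ^ (N + 1) * Dz1ₗ = Dz1ₗ * mulDiff ^ (N + 1) - (N + 1) • mulDiff ^ N := by
  have h := ((commute_Dz_mulDiff (W := W)).pow_right (N + 1)).eq
  rw [add_mul, mul_add, mulDiff_pow_succ_mul_Dz2] at h
  rw [eq_sub_iff_add_eq, ← add_right_cancel_iff (a := Dz2 * mulDiff ^ (N + 1)), h]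
  abel

end Commutation

lemma mulDiff_pow_apply (N : ℕ) (G : LogFieldData₂ W) (μ₁ : ℂ) (j₁ : ℕ) (μ₂ : ℂ) (j₂ : ℕ)
    (w : W) : (mulDiff ^ N) G μ₁ j₁ μ₂ j₂ w = ∑ i ∈ range (N + 1),
      ((-1 : ℤ) ^ i * (N.choose i : ℤ)) • G (μ₁ + ((N : ℂ) - (i : ℂ))) j₁ (μ₂ + (i : ℂ)) j₂ w := by
  induction N generalizing G μ₁ μ₂ with
  | zero => simp
  | succ N ih =>
    rw [pow_succ, Module.End.mul_apply, ih, sum_range_succ_alternating_choose_smul]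
    refine sum_congr rfl fun i _ => ?_
    rw [mulDiff_apply]
    push_cast
    ring_nf

lemma mulDiff_pow_apply_eq_zero {N : ℕ} {G : LogFieldData₂ W} {μ₁ : ℂ} {j₁ : ℕ} {μ₂ : ℂ}
    {j₂ : ℕ} {w : W} (h : ∀ i ≤ N, G (μ₁ + ((N : ℂ) - (i : ℂ))) j₁ (μ₂ + (i : ℂ)) j₂ w = 0) :
    (mulDiff ^ N) G μ₁ j₁ μ₂ j₂ w = 0 := by
  rw [mulDiff_pow_apply]
  exact sum_eq_zero fun i hi => by rw [h i (Nat.lt_succ_iff.mp (mem_range.mp hi)), smul_zero]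

section Locality

-- The coefficients of `a(z₁) b(z₂)` and of `[a(z₁), b(z₂)]`.
def tensorCoeff (a b : LogFieldData W) : LogFieldData₂ W := fun μ₁ j₁ μ₂ j₂ w =>
  a μ₁ j₁ (b μ₂ j₂ w)

def commCoeff (a b : LogFieldData W) : LogFieldData₂ W := fun μ₁ j₁ μ₂ j₂ w =>
  a μ₁ j₁ (b μ₂ j₂ w) - b μ₂ j₂ (a μ₁ j₁ w)

variable {a b : LogFieldData W} {N : ℕ}

lemma prodCoeff_eq_mulDiff_pow :
    prodCoeff a b N = (mulDiff ^ N) (tensorCoeff a b) := by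
  funext μ₁ j₁ μ₂ j₂ w
  rw [mulDiff_pow_apply]
  rfl

lemma isLocalOrd_iff_mulDiff_pow : IsLocalOrd a b N ↔ (mulDiff ^ N) (commCoeff a b) = 0 := by
  simp only [IsLocalOrd, funext_iff, mulDiff_pow_apply, Pi.zero_apply]
  rfl

lemma tensorCoeff_Dz_left : tensorCoeff (Dz a) b = Dz1ₗ (tensorCoeff a b) := rfl

lemma tensorCoeff_Del_left : tensorCoeff (Del a) b = Del1 (tensorCoeff a b) := rfl

lemma tensorCoeff_Dz_right (ha : ∀ μ j, IsLinearMap ℂ (a μ j)) :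
    tensorCoeff a (Dz b) = Dz2 (tensorCoeff a b) := by
  funext μ₁ j₁ μ₂ j₂ w
  simp only [tensorCoeff, Dz2_apply, Dz, (ha _ _).map_sub, (ha _ _).map_smul]

lemma tensorCoeff_Del_right (ha : ∀ μ j, IsLinearMap ℂ (a μ j)) :
    tensorCoeff a (Del b) = Del2 (tensorCoeff a b) := by
  funext μ₁ j₁ μ₂ j₂ w
  simp only [tensorCoeff, Del2_apply, Del, (ha _ _).map_smul]

lemma commCoeff_Dz_left (hb : ∀ μ j, IsLinearMap ℂ (b μ j)) :
    commCoeff (Dz a) b = Dz1ₗ (commCoeff a b) := by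
  funext μ₁ j₁ μ₂ j₂ w
  simp only [commCoeff, Dz1ₗ_apply, Dz1, Dz, (hb _ _).map_sub, (hb _ _).map_smul]
  module

lemma commCoeff_Dz_right (ha : ∀ μ j, IsLinearMap ℂ (a μ j)) :
    commCoeff a (Dz b) = Dz2 (commCoeff a b) := by
  funext μ₁ j₁ μ₂ j₂ w
  simp only [commCoeff, Dz2_apply, Dz, (ha _ _).map_sub, (ha _ _).map_smul]
  module

lemma commCoeff_Del_left (hb : ∀ μ j, IsLinearMap ℂ (b μ j)) :
    commCoeff (Del a) b = Del1 (commCoeff a b) := by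
  funext μ₁ j₁ μ₂ j₂ w
  simp only [commCoeff, Del1_apply, Del, (hb _ _).map_smul, smul_sub]

lemma commCoeff_Del_right (ha : ∀ μ j, IsLinearMap ℂ (a μ j)) :
    commCoeff a (Del b) = Del2 (commCoeff a b) := by
  funext μ₁ j₁ μ₂ j₂ w
  simp only [commCoeff, Del2_apply, Del, (ha _ _).map_smul, smul_sub]

lemma IsLocalOrd.succ (h : IsLocalOrd a b N) : IsLocalOrd a b (N + 1) := by
  rw [isLocalOrd_iff_mulDiff_pow] at h ⊢
  rw [pow_succ', Module.End.mul_apply, h, LinearMap.map_zero]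

lemma IsLocalOrd.mono {M : ℕ} (h : IsLocalOrd a b N) (hNM : N ≤ M) : IsLocalOrd a b M := by
  induction M, hNM using Nat.le_induction with
  | base => exact h
  | succ M _ ih => exact ih.succ

lemma IsLocalOrd.Dz_left (hb : ∀ μ j, IsLinearMap ℂ (b μ j)) (h : IsLocalOrd a b N) :
    IsLocalOrd (Dz a) b (N + 1) := by
  rw [isLocalOrd_iff_mulDiff_pow] at h ⊢
  rw [commCoeff_Dz_left hb, ← Module.End.mul_apply, mulDiff_pow_succ_mul_Dz1ₗ,
    LinearMap.sub_apply, LinearMap.smul_apply, Module.End.mul_apply, pow_succ',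
    Module.End.mul_apply, h]
  simp only [LinearMap.map_zero, smul_zero, sub_zero]

lemma IsLocalOrd.Dz_right (ha : ∀ μ j, IsLinearMap ℂ (a μ j)) (h : IsLocalOrd a b N) :
    IsLocalOrd a (Dz b) (N + 1) := by
  rw [isLocalOrd_iff_mulDiff_pow] at h ⊢
  rw [commCoeff_Dz_right ha, ← Module.End.mul_apply, mulDiff_pow_succ_mul_Dz2,
    LinearMap.add_apply, LinearMap.smul_apply, Module.End.mul_apply, pow_succ',
    Module.End.mul_apply, h]
  simp only [LinearMap.map_zero, smul_zero, add_zero]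

lemma IsLocalOrd.Del_left (hb : ∀ μ j, IsLinearMap ℂ (b μ j)) (h : IsLocalOrd a b N) :
    IsLocalOrd (Del a) b N := by
  rw [isLocalOrd_iff_mulDiff_pow] at h ⊢
  rw [commCoeff_Del_left hb, ← Module.End.mul_apply, ← (commute_Del1_mulDiff.pow_right N).eq,
    Module.End.mul_apply, h, LinearMap.map_zero]

lemma IsLocalOrd.Del_right (ha : ∀ μ j, IsLinearMap ℂ (a μ j)) (h : IsLocalOrd a b N) :
    IsLocalOrd a (Del b) N := by
  rw [isLocalOrd_iff_mulDiff_pow] at h ⊢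
  rw [commCoeff_Del_right ha, ← Module.End.mul_apply, ← (commute_Del2_mulDiff.pow_right N).eq,
    Module.End.mul_apply, h, LinearMap.map_zero]

end Locality

section Diagonal

-- `diagS` sums with `finsum`, which is additive only on data whose diagonal slices are finite.
def DiagFinite (G : LogFieldData₂ W) : Prop :=
  ∀ (μ : ℂ) (j₁ j₂ : ℕ) (w : W), (support fun μ₁ => G μ₁ j₁ (μ - μ₁) j₂ w).Finite

noncomputable def diagSlice (G : LogFieldData₂ W) (μ : ℂ) (j₁ j₂ : ℕ) (w : W) : W :=
  ∑ᶠ μ₁, G μ₁ j₁ (μ - μ₁) j₂ w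

omit [Module ℂ W] in
lemma diagS_eq_sum_antidiagonal (G : LogFieldData₂ W) (μ : ℂ) (j : ℕ) (w : W) :
    diagS G μ j w = ∑ x ∈ antidiagonal j, diagSlice G μ x.1 x.2 w := by
  rw [Nat.sum_antidiagonal_eq_sum_range_succ_mk]
  rfl

variable {G G' : LogFieldData₂ W}

omit [Module ℂ W] in
lemma DiagFinite.finite_support_shift (hG : DiagFinite G) (c d : ℂ) (j₁ j₂ : ℕ) (w : W) :
    (support fun x => G (x + c) j₁ (d - x) j₂ w).Finite :=
  ((hG (d + c) j₁ j₂ w).preimage (add_left_injective c).injOn).subset fun x hx => by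
    simpa only [mem_support, Set.mem_preimage, add_sub_add_right_eq_sub] using hx

lemma DiagFinite.smul (hG : DiagFinite G) (c : ℂ) : DiagFinite (c • G) := fun μ j₁ j₂ w =>
  (hG μ j₁ j₂ w).subset (support_const_smul_subset c _)

lemma DiagFinite.mulDiff (hG : DiagFinite G) : DiagFinite (mulDiff G) := by
  intro μ j₁ j₂ w
  refine ((hG.finite_support_shift 1 μ j₁ j₂ w).union (hG (μ + 1) j₁ j₂ w)).subset fun x hx => ?_
  contrapose! hx
  simp_all [mulDiff_apply, sub_add_eq_add_sub]

lemma DiagFinite.dz1 (hG : DiagFinite G) : DiagFinite (Dz1 G) := by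
  intro μ j₁ j₂ w
  refine ((hG.finite_support_shift (-1) μ (j₁ + 1) j₂ w).union
    (hG.finite_support_shift (-1) μ j₁ j₂ w)).subset fun x hx => ?_
  contrapose! hx
  simp_all [Dz1, ← sub_eq_add_neg]

lemma DiagFinite.dz1_iterate (hG : DiagFinite G) (k : ℕ) : DiagFinite (Dz1^[k] G) := by
  induction k with
  | zero => exact hG
  | succ k ih => rw [iterate_succ_apply']; exact ih.dz1

lemma DiagFinite.dz2 (hG : DiagFinite G) : DiagFinite (Dz2 G) := by
  intro μ j₁ j₂ w
  refine ((hG (μ - 1) j₁ (j₂ + 1) w).union (hG (μ - 1) j₁ j₂ w)).subset fun x hx => ?_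
  contrapose! hx
  simp_all [Dz2_apply, sub_right_comm μ x 1]

lemma DiagFinite.finite_support_smul (hG : DiagFinite G) (s : ℂ → ℂ) (μ : ℂ) (j₁ j₂ : ℕ)
    (w : W) : (support fun x => s x • G x j₁ (μ - x) j₂ w).Finite :=
  (hG μ j₁ j₂ w).subset (support_smul_subset_right s _)

variable (μ : ℂ) (j₁ j₂ : ℕ) (w : W)

omit [Module ℂ W] in
lemma diagSlice_add (hG : DiagFinite G) (hG' : DiagFinite G') :
    diagSlice (G + G') μ j₁ j₂ w = diagSlice G μ j₁ j₂ w + diagSlice G' μ j₁ j₂ w :=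
  finsum_add_distrib (hG μ j₁ j₂ w) (hG' μ j₁ j₂ w)

omit [Module ℂ W] in
lemma diagSlice_sub (hG : DiagFinite G) (hG' : DiagFinite G') :
    diagSlice (G - G') μ j₁ j₂ w = diagSlice G μ j₁ j₂ w - diagSlice G' μ j₁ j₂ w :=
  finsum_sub_distrib (hG μ j₁ j₂ w) (hG' μ j₁ j₂ w)

lemma diagSlice_smul (c : ℂ) : diagSlice (c • G) μ j₁ j₂ w = c • diagSlice G μ j₁ j₂ w :=
  (smul_finsum c _).symm

lemma diagSlice_mulDiff (hG : DiagFinite G) : diagSlice (mulDiff G) μ j₁ j₂ w = 0 := by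
  have shifted : ∑ᶠ x, G (x + 1) j₁ (μ - x) j₂ w = ∑ᶠ x, G x j₁ (μ + 1 - x) j₂ w := by
    rw [← finsum_comp_add_right (fun x => G x j₁ (μ + 1 - x) j₂ w) 1]
    simp only [add_sub_add_right_eq_sub]
  simp only [diagSlice, mulDiff_apply, sub_add_eq_add_sub]
  rw [finsum_sub_distrib (hG.finite_support_shift 1 μ j₁ j₂ w) (hG (μ + 1) j₁ j₂ w), shifted,
    sub_self]

lemma diagSlice_Dz (hG : DiagFinite G) :
    diagSlice ((Dz1ₗ + Dz2 : End₂) G) μ j₁ j₂ w =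
      ((j₁ : ℂ) + 1) • diagSlice G (μ - 1) (j₁ + 1) j₂ w +
        ((j₂ : ℂ) + 1) • diagSlice G (μ - 1) j₁ (j₂ + 1) w -
          (μ - 1) • diagSlice G (μ - 1) j₁ j₂ w := by
  have h₁ : ∑ᶠ x, Dz1 G x j₁ (μ - x) j₂ w = ∑ᶠ x,
      (((j₁ : ℂ) + 1) • G x (j₁ + 1) (μ - 1 - x) j₂ w - x • G x j₁ (μ - 1 - x) j₂ w) := by
    rw [← finsum_comp_add_right _ 1]
    simp only [Dz1, add_sub_cancel_right, sub_add_eq_sub_sub, sub_right_comm μ _ (1 : ℂ)]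
  have h₂ : ∑ᶠ x, Dz2 G x j₁ (μ - x) j₂ w = ∑ᶠ x,
      (((j₂ : ℂ) + 1) • G x j₁ (μ - 1 - x) (j₂ + 1) w -
        (μ - 1 - x) • G x j₁ (μ - 1 - x) j₂ w) := by
    simp only [Dz2_apply, sub_right_comm μ _ (1 : ℂ)]
  have hcombine : ∑ᶠ x, x • G x j₁ (μ - 1 - x) j₂ w + ∑ᶠ x, (μ - 1 - x) • G x j₁ (μ - 1 - x) j₂ w =
      (μ - 1) • ∑ᶠ x, G x j₁ (μ - 1 - x) j₂ w := by
    rw [← finsum_add_distrib (hG.finite_support_smul (fun x => x) _ _ _ _)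
      (hG.finite_support_smul (fun x => μ - 1 - x) _ _ _ _), smul_finsum]
    simp only [← add_smul, add_sub_cancel]
  simp only [diagSlice, LinearMap.add_apply, Pi.add_apply, Dz1ₗ_apply]
  rw [finsum_add_distrib (hG.dz1 μ j₁ j₂ w) (hG.dz2 μ j₁ j₂ w), h₁, h₂,
    finsum_sub_distrib (hG.finite_support_smul (fun _ => (j₁ : ℂ) + 1) _ _ _ _)
      (hG.finite_support_smul (fun x => x) _ _ _ _),
    finsum_sub_distrib (hG.finite_support_smul (fun _ => (j₂ : ℂ) + 1) _ _ _ _)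
      (hG.finite_support_smul (fun x => μ - 1 - x) _ _ _ _),
    ← smul_finsum, ← smul_finsum, ← hcombine]
  abel

lemma diagSlice_Del (hG : DiagFinite G) :
    diagSlice ((Del1 + Del2 : End₂) G) μ j₁ j₂ w =
      ((j₁ : ℂ) + 1) • diagSlice G μ (j₁ + 1) j₂ w +
        ((j₂ : ℂ) + 1) • diagSlice G μ j₁ (j₂ + 1) w := by
  simp only [diagSlice, LinearMap.add_apply, Pi.add_apply, Del1_apply, Del2_apply, smul_finsum]
  exact finsum_add_distrib (hG.finite_support_smul (fun _ => (j₁ : ℂ) + 1) _ _ _ _)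
    (hG.finite_support_smul (fun _ => (j₂ : ℂ) + 1) _ _ _ _)

omit [Module ℂ W] in
lemma diagS_add (hG : DiagFinite G) (hG' : DiagFinite G') :
    diagS (G + G') = diagS G + diagS G' := by
  funext μ j w
  simp only [Pi.add_apply, diagS_eq_sum_antidiagonal, diagSlice_add _ _ _ _ hG hG',
    sum_add_distrib]

omit [Module ℂ W] in
lemma diagS_sub (hG : DiagFinite G) (hG' : DiagFinite G') :
    diagS (G - G') = diagS G - diagS G' := by
  funext μ j w
  simp only [Pi.sub_apply, diagS_eq_sum_antidiagonal, diagSlice_sub _ _ _ _ hG hG',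
    sum_sub_distrib]

lemma diagS_smul (c : ℂ) (G : LogFieldData₂ W) : diagS (c • G) = c • diagS G := by
  funext μ j w
  simp only [Pi.smul_apply, diagS_eq_sum_antidiagonal, diagSlice_smul, smul_sum]

lemma diagS_mulDiff (hG : DiagFinite G) : diagS (mulDiff G) = 0 := by
  funext μ j w
  simp only [Pi.zero_apply, diagS_eq_sum_antidiagonal, diagSlice_mulDiff _ _ _ _ hG,
    sum_const_zero]

lemma Dz_diagS (hG : DiagFinite G) :
    Dz (diagS G) = diagS ((Dz1ₗ + Dz2 : End₂) G) := by
  funext μ j w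
  simp only [Dz, diagS_eq_sum_antidiagonal, diagSlice_Dz _ _ _ _ hG, sum_sub_distrib,
    ← smul_sum]
  congr 1
  exact smul_sum_antidiagonal_succ (fun p q => diagSlice G (μ - 1) p q w) j

lemma Del_diagS (hG : DiagFinite G) :
    Del (diagS G) = diagS ((Del1 + Del2 : End₂) G) := by
  funext μ j w
  simp only [Del, diagS_eq_sum_antidiagonal, diagSlice_Del _ _ _ _ hG]
  exact smul_sum_antidiagonal_succ (fun p q => diagSlice G μ p q w) j

end Diagonal

section LogFields

variable {a b : LogFieldData W} {N : ℕ}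

-- Truncation of `b` bounds the support from below; to bound it from above, locality moves `a`
-- next to `w`, where the truncation of `a` applies.
lemma IsLocalOrd.diagFinite (ha : IsLogField a) (hb : IsLogField b) (h : IsLocalOrd a b N) :
    DiagFinite ((mulDiff ^ N) (tensorCoeff a b)) := by
  obtain ⟨haLin, -, ⟨A, hA⟩, haTrunc⟩ := ha
  obtain ⟨hbLin, -, -, hbTrunc⟩ := hb
  intro μ j₁ j₂ w
  choose U hU using fun α => haTrunc w α
  choose L hL using fun α => hbTrunc w (μ - α)
  have hrev : (mulDiff ^ N) (tensorCoeff a b) =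
      (mulDiff ^ N) (fun x j₁ y j₂ w => b y j₂ (a x j₁ w)) := by
    rw [isLocalOrd_iff_mulDiff_pow] at h
    rw [← sub_eq_zero, ← LinearMap.map_sub]
    exact h
  refine (A.finite_toSet.biUnion fun α _ =>
    (Set.finite_Icc (-L α) (U α)).image fun k : ℤ => α + k).subset fun x hx => ?_
  rw [mem_support] at hx
  obtain ⟨i, hi, hai⟩ : ∃ i ≤ N, a (x + ((N : ℂ) - (i : ℂ))) ≠ 0 := by
    by_contra! hzero
    exact hx (mulDiff_pow_apply_eq_zero fun i hi => by simp [tensorCoeff, hzero i hi])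
  obtain ⟨α, hα, k', hk'⟩ := hA _ hai
  have hxα : x = α + ((k' - N + i : ℤ) : ℂ) := by push_cast; linear_combination hk'
  refine Set.mem_biUnion hα ⟨k' - N + i, Set.mem_Icc.mpr ⟨?_, ?_⟩, hxα.symm⟩
  · by_contra! hk
    refine hx (mulDiff_pow_apply_eq_zero fun i' _ => ?_)
    have : μ - x + i' = (μ - α) + ((i' - (k' - N + i) : ℤ) : ℂ) := by
      rw [hxα]; push_cast; ring
    simp only [tensorCoeff]
    rw [this, hL α _ (by omega), (haLin _ _).map_zero]
  · by_contra! hk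
    rw [hrev] at hx
    refine hx (mulDiff_pow_apply_eq_zero fun i' hi' => ?_)
    have : x + ((N : ℂ) - i') = α + ((k' - N + i + N - i' : ℤ) : ℂ) := by
      rw [hxα]; push_cast; ring
    rw [this, hU α _ (by omega), (hbLin _ _).map_zero]

lemma isLogField_Dz (ha : IsLogField a) : IsLogField (Dz a) := by
  obtain ⟨hLin, hPoly, ⟨A, hA⟩, hTrunc⟩ := ha
  refine ⟨fun μ j => ?_, fun μ => ?_, ⟨A.image (· + 1), fun μ hμ => ?_⟩, fun w α => ?_⟩
  · exact (((j : ℂ) + 1) • (hLin (μ - 1) (j + 1)).mk' - (μ - 1) • (hLin (μ - 1) j).mk').isLinear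
  · obtain ⟨J, hJ⟩ := hPoly (μ - 1)
    exact ⟨J, fun j hj => funext fun w => by simp [Dz, hJ j hj, hJ (j + 1) (by omega)]⟩
  · obtain ⟨α, hα, k, hk⟩ :=
      hA (μ - 1) fun h0 => hμ (funext fun j => funext fun w => by simp [Dz, h0])
    exact ⟨α + 1, mem_image_of_mem _ hα, k, by linear_combination hk⟩
  · obtain ⟨K, hK⟩ := hTrunc w (α - 1)
    refine ⟨K, fun k hk j => ?_⟩
    simp [Dz, show α + (k : ℂ) - 1 = α - 1 + k by ring, hK k hk]

lemma isLogField_Del (ha : IsLogField a) : IsLogField (Del a) := by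
  obtain ⟨hLin, hPoly, ⟨A, hA⟩, hTrunc⟩ := ha
  refine ⟨fun μ j => ?_, fun μ => ?_, ⟨A, fun μ hμ => ?_⟩, fun w α => ?_⟩
  · exact (((j : ℂ) + 1) • (hLin μ (j + 1)).mk').isLinear
  · obtain ⟨J, hJ⟩ := hPoly μ
    exact ⟨J, fun j hj => funext fun w => by simp [Del, hJ (j + 1) (by omega)]⟩
  · exact hA μ fun h0 => hμ (funext fun j => funext fun w => by simp [Del, h0])
  · obtain ⟨K, hK⟩ := hTrunc w α
    exact ⟨K, fun k hk j => by simp [Del, hK k hk]⟩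

end LogFields

section NProduct

variable {G : LogFieldData₂ W} {a b : LogFieldData W} {N : ℕ}

lemma diagS_Dz1_iterate_succ_mulDiff (hG : DiagFinite G) (k : ℕ) :
    diagS (Dz1^[k + 1] (mulDiff G)) = ((k : ℂ) + 1) • diagS (Dz1^[k] G) := by
  have leibniz :
      Dz1^[k + 1] (mulDiff G) = mulDiff (Dz1^[k + 1] G) + ((k : ℂ) + 1) • Dz1^[k] G := by
    simpa [Dz1ₗ_pow_apply, ← Nat.cast_smul_eq_nsmul ℂ] using
      LinearMap.congr_fun (Dz1ₗ_pow_succ_mul_mulDiff k) G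
  rw [leibniz, diagS_add (hG.dz1_iterate _).mulDiff ((hG.dz1_iterate k).smul _),
    diagS_mulDiff (hG.dz1_iterate _), diagS_smul, zero_add]

lemma nProductAux_of_le {n : ℤ} (h : (N : ℤ) ≤ n) : nProductAux a b N n = 0 := if_pos h

lemma nProductAux_of_eq_add {n : ℤ} {k : ℕ} (h : (N : ℤ) = n + k + 1) :
    nProductAux a b N n =
      ((k.factorial : ℂ))⁻¹ • diagS (Dz1^[k] ((mulDiff ^ N) (tensorCoeff a b))) := by
  rw [nProductAux, if_neg (by omega), prodCoeff_eq_mulDiff_pow,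
    show (N - n - 1).toNat = k by omega]

lemma nProductAux_succ (hG : DiagFinite ((mulDiff ^ N) (tensorCoeff a b))) (n : ℤ) :
    nProductAux a b (N + 1) n = nProductAux a b N n := by
  rcases lt_trichotomy n N with hn | rfl | hn
  · obtain ⟨k, hk⟩ : ∃ k : ℕ, (N : ℤ) = n + k + 1 := ⟨(N - n - 1).toNat, by omega⟩
    rw [nProductAux_of_eq_add (k := k + 1) (by push_cast; omega), nProductAux_of_eq_add hk,
      pow_succ', Module.End.mul_apply, diagS_Dz1_iterate_succ_mulDiff hG, smul_smul,
      inv_factorial_succ_mul]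
  · rw [nProductAux_of_eq_add (k := 0) (by push_cast; ring), nProductAux_of_le le_rfl, pow_succ',
      Module.End.mul_apply, iterate_zero_apply, diagS_mulDiff hG, smul_zero]
  · rw [nProductAux_of_le (by push_cast; omega), nProductAux_of_le hn.le]

lemma nProductAux_eq_of_le {M : ℕ} (ha : IsLogField a) (hb : IsLogField b)
    (hM : IsLocalOrd a b M) (hMN : M ≤ N) (n : ℤ) : nProductAux a b N n = nProductAux a b M n := by
  induction N, hMN using Nat.le_induction with
  | base => rfl
  | succ N hMN ih => rw [nProductAux_succ ((hM.mono hMN).diagFinite ha hb), ih]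

lemma nProduct_eq_nProductAux (ha : IsLogField a) (hb : IsLogField b) (h : IsLocalOrd a b N)
    (n : ℤ) : nProduct a b n = nProductAux a b N n :=
  (nProductAux_eq_of_le ha hb (Nat.sInf_mem (s := {M | IsLocalOrd a b M}) ⟨N, h⟩)
    (Nat.sInf_le h) n).symm

lemma nProductAux_Dz_left (hG : DiagFinite ((mulDiff ^ N) (tensorCoeff a b))) (n : ℤ) :
    nProductAux (Dz a) b (N + 1) n = (-(n : ℂ)) • nProductAux a b N (n - 1) := by
  rcases le_or_gt ((N : ℤ) + 1) n with hn | hn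
  · rw [nProductAux_of_le (by push_cast; omega), nProductAux_of_le (by omega), smul_zero]
  obtain ⟨k, hk⟩ : ∃ k : ℕ, (N : ℤ) = n + k := ⟨(N - n).toNat, by omega⟩
  rw [nProductAux_of_eq_add (k := k) (by push_cast; omega),
    nProductAux_of_eq_add (k := k) (by omega)]
  set P := (mulDiff ^ N) (tensorCoeff a b)
  have commutator : (mulDiff ^ (N + 1)) (tensorCoeff (Dz a) b) =
      Dz1 (mulDiff P) - ((N : ℂ) + 1) • P := by
    rw [tensorCoeff_Dz_left, ← Module.End.mul_apply, mulDiff_pow_succ_mul_Dz1ₗ,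
      LinearMap.sub_apply, Module.End.mul_apply, pow_succ', Module.End.mul_apply,
      LinearMap.smul_apply, ← Nat.cast_smul_eq_nsmul ℂ, Nat.cast_succ]
    rfl
  have iterated : Dz1^[k] (Dz1 (mulDiff P) - ((N : ℂ) + 1) • P) =
      Dz1^[k + 1] (mulDiff P) - ((N : ℂ) + 1) • Dz1^[k] P := by
    rw [← Dz1ₗ_pow_apply, ← Dz1ₗ_pow_apply, ← Dz1ₗ_pow_apply, LinearMap.map_sub,
      LinearMap.map_smul, pow_succ, Module.End.mul_apply, Dz1ₗ_apply]
  rw [commutator, iterated, diagS_sub (hG.mulDiff.dz1_iterate _) ((hG.dz1_iterate k).smul _),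
    diagS_Dz1_iterate_succ_mulDiff hG, diagS_smul, ← sub_smul, smul_smul, smul_smul]
  have hNk : (N : ℂ) = n + k := by exact_mod_cast hk
  rw [hNk]
  ring_nf

lemma nProductAux_leibniz {E : LogFieldData W → LogFieldData W}
    {E₂ : End₂} {a' b' : LogFieldData W}
    (hE : ∀ (c : ℂ) f, E (c • f) = c • E f)
    (hdiag : ∀ G, DiagFinite G → E (diagS G) = diagS (E₂ G))
    (hmulDiff : Commute E₂ mulDiff) (hDz1 : Commute E₂ Dz1ₗ)
    (hsplit : tensorCoeff a' b + tensorCoeff a b' = E₂ (tensorCoeff a b))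
    (hG : DiagFinite ((mulDiff ^ N) (tensorCoeff a b)))
    (hG₁ : DiagFinite ((mulDiff ^ N) (tensorCoeff a' b)))
    (hG₂ : DiagFinite ((mulDiff ^ N) (tensorCoeff a b'))) (n : ℤ) :
    E (nProductAux a b N n) = nProductAux a' b N n + nProductAux a b' N n := by
  rcases le_or_gt (N : ℤ) n with hn | hn
  · simpa [nProductAux_of_le hn] using hE 0 0
  obtain ⟨k, hk⟩ : ∃ k : ℕ, (N : ℤ) = n + k + 1 := ⟨(N - n - 1).toNat, by omega⟩
  rw [nProductAux_of_eq_add hk, nProductAux_of_eq_add hk, nProductAux_of_eq_add hk, hE,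
    hdiag _ (hG.dz1_iterate k), ← smul_add, ← diagS_add (hG₁.dz1_iterate k) (hG₂.dz1_iterate k)]
  congr 2
  simp only [← Dz1ₗ_pow_apply, ← LinearMap.map_add, hsplit, ← Module.End.mul_apply]
  rw [((hDz1.pow_right k).mul_right (hmulDiff.pow_right N)).eq]

lemma nProduct_Dz_left (ha : IsLogField a) (hb : IsLogField b) (hab : IsLocal a b) (n : ℤ) :
    nProduct (Dz a) b n = (-(n : ℂ)) • nProduct a b (n - 1) := by
  obtain ⟨N, hN⟩ := hab
  rw [nProduct_eq_nProductAux (isLogField_Dz ha) hb (hN.Dz_left hb.1),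
    nProduct_eq_nProductAux ha hb hN, nProductAux_Dz_left (hN.diagFinite ha hb)]

lemma Dz_nProduct (ha : IsLogField a) (hb : IsLogField b) (hab : IsLocal a b) (n : ℤ) :
    Dz (nProduct a b n) = nProduct (Dz a) b n + nProduct a (Dz b) n := by
  obtain ⟨N, hN⟩ := hab
  have hl := hN.Dz_left hb.1
  have hr := hN.Dz_right ha.1
  rw [nProduct_eq_nProductAux ha hb hN.succ, nProduct_eq_nProductAux (isLogField_Dz ha) hb hl,
    nProduct_eq_nProductAux ha (isLogField_Dz hb) hr]
  refine nProductAux_leibniz Dz_smul (fun G => Dz_diagS) commute_Dz_mulDiff commute_Dz_Dz1ₗ ?_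
    (hN.succ.diagFinite ha hb) (hl.diagFinite (isLogField_Dz ha) hb)
    (hr.diagFinite ha (isLogField_Dz hb)) n
  rw [tensorCoeff_Dz_left, tensorCoeff_Dz_right ha.1, LinearMap.add_apply]

lemma Del_nProduct (ha : IsLogField a) (hb : IsLogField b) (hab : IsLocal a b) (n : ℤ) :
    Del (nProduct a b n) = nProduct (Del a) b n + nProduct a (Del b) n := by
  obtain ⟨N, hN⟩ := hab
  have hl := hN.Del_left hb.1
  have hr := hN.Del_right ha.1
  rw [nProduct_eq_nProductAux ha hb hN, nProduct_eq_nProductAux (isLogField_Del ha) hb hl,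
    nProduct_eq_nProductAux ha (isLogField_Del hb) hr]
  refine nProductAux_leibniz Del_smul (fun G => Del_diagS)
    (commute_Del1_mulDiff.add_left commute_Del2_mulDiff) commute_Del_Dz1ₗ ?_
    (hN.diagFinite ha hb) (hl.diagFinite (isLogField_Del ha) hb)
    (hr.diagFinite ha (isLogField_Del hb)) n
  rw [tensorCoeff_Del_left, tensorCoeff_Del_right ha.1, LinearMap.add_apply]

end NProduct

theorem nProduct_derivation_rules_general (a b : LogFieldData W)
    (ha : IsLogField a) (hb : IsLogField b) (hab : IsLocal a b)
    (n : ℤ) :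
    nProduct (Dz a) b n = (-(n : ℂ)) • nProduct a b (n - 1) ∧
    Dz (nProduct a b n) = nProduct (Dz a) b n + nProduct a (Dz b) n ∧
    Del (nProduct a b n) = nProduct (Del a) b n + nProduct a (Del b) n :=
  ⟨nProduct_Dz_left ha hb hab n, Dz_nProduct ha hb hab n, Del_nProduct ha hb hab n⟩

/-- For local logarithmic fields `a, b` (with `a` also local to itself) and all `n ∈ ℤ`:
(i) `(D_z a)_{(n)} b = −n · a_{(n−1)} b`;
(ii) `D_z (a_{(n)} b) = (D_z a)_{(n)} b + a_{(n)} (D_z b)`;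
(iii) `∂_ℓ (a_{(n)} b) = (∂_ℓ a)_{(n)} b + a_{(n)} (∂_ℓ b)`. -/
theorem nProduct_derivation_rules (a b : LogFieldData W)
    (ha : IsLogField a) (hb : IsLogField b) (hab : IsLocal a b) (haa : IsLocal a a)
    (n : ℤ) :
    nProduct (Dz a) b n = (-(n : ℂ)) • nProduct a b (n - 1) ∧
    Dz (nProduct a b n) = nProduct (Dz a) b n + nProduct a (Dz b) n ∧
    Del (nProduct a b n) = nProduct (Del a) b n + nProduct a (Del b) n :=
  nProduct_derivation_rules_general a b ha hb hab n
end

section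
/- For all i, j ∈ {1,2,3} and all m ∈ ℤ, one has [β_{j,m}, P_i] = 0 as endomorphisms of V. -/
/-!
Commute `β_{j,m}` past the three pieces of `P_i`. By (R3), `[β_{j,m}, β_{i,0}] = Σ_k ε_{jik} α^k_m`;
by (R6) and (R2), `[β_{j,m}, x^a_0 W^b] = δ_{aj} δ_{m0} α^b_0`; and since
`[β_{j,m}, x^c_n] = δ_{cj} δ_{m+n,0}`, the quadratic sum contributes two contractions which
antisymmetry of `ε` makes equal, giving `-m Σ_k ε_{ijk} x^k_m` in total. As
`δ_{m0} α^k_0 - m x^k_m = α^k_m` for every `m`, everything cancels by `ε_{jik} = -ε_{ijk}`.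
Moving `β_{j,m}` inside the quadratic sum is legitimate because on a fixed vector only finitely
many of its terms are nonzero, by (R4) and the commutativity of the `x`'s.
-/

open Finset

/-- Levi-Civita symbol on `{1,2,3}` (indexed by `Fin 3`). -/
def eps (i j k : Fin 3) : ℤ :=
  (((j : ℤ) - (i : ℤ)) * ((k : ℤ) - (i : ℤ)) * ((k : ℤ) - (j : ℤ))) / 2

variable {V : Type*} [AddCommGroup V] [Module ℂ V]

/-- `x^i_n`: equals the given `x^i_0` for `n = 0`, and `−(1/n) α^i_n` for `n ≠ 0`. -/
noncomputable def xop (α : Fin 3 → ℤ → Module.End ℂ V) (x0 : Fin 3 → Module.End ℂ V)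
    (i : Fin 3) (n : ℤ) : Module.End ℂ V :=
  if n = 0 then x0 i else (-(n : ℂ)⁻¹) • α i n

/-- `P_i = β_{i,0} + Σ_{j,k} ε_{ijk} x^j_0 W^k − ½ Σ_{j,k} ε_{ijk} Σ_{m∈ℤ} m x^j_{−m} x^k_m`,
defined pointwise on vectors (the inner sum has finitely many nonzero terms on each vector). -/
noncomputable def Pop (α β : Fin 3 → ℤ → Module.End ℂ V) (x0 : Fin 3 → Module.End ℂ V)
    (i : Fin 3) : V → V := fun v =>
  β i 0 v + (∑ j : Fin 3, ∑ k : Fin 3, eps i j k • (x0 j) ((α k 0) v))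
    - (2 : ℂ)⁻¹ • ∑ j : Fin 3, ∑ k : Fin 3, eps i j k •
        ∑ᶠ m : ℤ, (m : ℂ) • (xop α x0 j (-m)) ((xop α x0 k m) v)

/-- `x*_{i,n} = −(1/n)(β_{i,n} + Σ_{j,k} ε_{ijk} x^j_n W^k − ½ Σ_{j,k} ε_{ijk} Σ_m m x^j_{n−m} x^k_m)`
for `n ≠ 0`, defined pointwise on vectors. -/
noncomputable def xstarop (α β : Fin 3 → ℤ → Module.End ℂ V) (x0 : Fin 3 → Module.End ℂ V)
    (i : Fin 3) (n : ℤ) : V → V := fun v =>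
  (-(n : ℂ)⁻¹) • (β i n v + (∑ j : Fin 3, ∑ k : Fin 3, eps i j k • (xop α x0 j n) ((α k 0) v))
    - (2 : ℂ)⁻¹ • ∑ j : Fin 3, ∑ k : Fin 3, eps i j k •
        ∑ᶠ m : ℤ, (m : ℂ) • (xop α x0 j (n - m)) ((xop α x0 k m) v))

open Function

lemma eps_swap_left (a b c : Fin 3) : eps a b c = -eps b a c := by
  revert a b c; decide

lemma eps_swap_right (a b c : Fin 3) : eps a b c = -eps a c b := by
  revert a b c; decide

lemma apply_apply_of_lie_eq {R M : Type*} [Semiring R] [AddCommGroup M] [Module R M]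
    {f g h : Module.End R M} (hfg : ⁅f, g⁆ = h) (u : M) :
    f (g u) = g (f u) + h u := by
  rw [← hfg, Ring.lie_def]
  simp

lemma two_inv_smul_sum_eps_smul_ite_sub_ite {M : Type*} [AddCommGroup M] [Module ℂ M]
    (i j : Fin 3) (f : Fin 3 → M) :
    (2 : ℂ)⁻¹ • ∑ a : Fin 3, ∑ b : Fin 3,
        eps i a b • ((if a = j then f b else 0) - if b = j then f a else 0)
      = ∑ k : Fin 3, eps i j k • f k := by
  have hswap : ∑ a : Fin 3, eps i a j • f a = -∑ k : Fin 3, eps i j k • f k := by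
    simp only [eps_swap_right i _ j, neg_smul, Finset.sum_neg_distrib]
  simp only [smul_sub, smul_ite, smul_zero, Finset.sum_sub_distrib, Finset.sum_ite_eq',
    Finset.mem_univ, if_true]
  rw [Finset.sum_comm (f := fun a b => if a = j then eps i a b • f b else 0)]
  simp only [Finset.sum_ite_eq', Finset.mem_univ, if_true, hswap]
  module

lemma hasFiniteSupport_of_eq_zero_of_ne {ι M : Type*} [Zero M] {f : ι → M} (a : ι)
    (hf : ∀ x ≠ a, f x = 0) : HasFiniteSupport f :=
  (Set.finite_singleton a).subset fun x hx => by_contra fun hxa => hx (hf x hxa)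

section Relations

variable (α β : Fin 3 → ℤ → Module.End ℂ V) (x0 : Fin 3 → Module.End ℂ V)

lemma commute_xop_xop
    (R1 : ∀ (i j : Fin 3) (m n : ℤ), ⁅α i m, α j n⁆ = 0)
    (R5a : ∀ (i j : Fin 3) (n : ℤ), ⁅α j n, x0 i⁆ = 0)
    (R5b : ∀ i j : Fin 3, ⁅x0 i, x0 j⁆ = 0) (c d : Fin 3) (p q : ℤ) :
    Commute (xop α x0 c p) (xop α x0 d q) := by
  unfold xop
  split_ifs
  · exact commute_iff_lie_eq.2 (R5b c d)
  · exact ((commute_iff_lie_eq.2 (R5a c d q)).symm).smul_right _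
  · exact (commute_iff_lie_eq.2 (R5a d c p)).smul_left _
  · exact ((commute_iff_lie_eq.2 (R1 c d p q)).smul_left _).smul_right _

lemma beta_apply_xop
    (R2 : ∀ (i j : Fin 3) (m n : ℤ), ⁅β i m, α j n⁆
      = if i = j ∧ m + n = 0 then (m : ℂ) • (1 : Module.End ℂ V) else 0)
    (R6 : ∀ (i j : Fin 3) (n : ℤ), ⁅β j n, x0 i⁆
      = if i = j ∧ n = 0 then (1 : Module.End ℂ V) else 0) (a c : Fin 3) (p n : ℤ) (u : V) :
    β a p (xop α x0 c n u) = xop α x0 c n (β a p u) + if c = a ∧ p + n = 0 then u else 0 := by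
  unfold xop
  by_cases hn : n = 0
  · subst hn
    rw [if_pos rfl, apply_apply_of_lie_eq (R6 c a p), add_zero]
    split_ifs <;> rfl
  · rw [if_neg hn, LinearMap.smul_apply, LinearMap.smul_apply, map_smul,
      apply_apply_of_lie_eq (R2 a c p n), smul_add]
    congr 1
    by_cases h : c = a ∧ p + n = 0
    · obtain ⟨rfl, hpn⟩ := h
      have hp : (p : ℂ) = -n := by rw [← Int.cast_neg]; congr 1; omega
      simp [hpn, hp, smul_smul, hn]
    · have h' : ¬(a = c ∧ p + n = 0) := fun h' => h ⟨h'.1.symm, h'.2⟩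
      simp [h, h']

lemma xop_apply_eq_zero {u : V} {N : ℤ} (hu : ∀ c n, N ≤ n → α c n u = 0) (c : Fin 3) {n : ℤ}
    (hNn : N ≤ n) (hn : 0 < n) : xop α x0 c n u = 0 := by
  simp [xop, hn.ne', hu c n hNn]

lemma hasFiniteSupport_smul_xop_xop
    (R1 : ∀ (i j : Fin 3) (m n : ℤ), ⁅α i m, α j n⁆ = 0)
    (R5a : ∀ (i j : Fin 3) (n : ℤ), ⁅α j n, x0 i⁆ = 0)
    (R5b : ∀ i j : Fin 3, ⁅x0 i, x0 j⁆ = 0)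
    {u : V} {N : ℤ} (hu : ∀ c n, N ≤ n → α c n u = 0) (a b : Fin 3) :
    HasFiniteSupport fun n : ℤ => (n : ℂ) • xop α x0 a (-n) (xop α x0 b n u) := by
  refine (Set.finite_Ioo (-max N 1) (max N 1)).subset fun n hn => ?_
  by_contra hout
  rw [Set.mem_Ioo, not_and_or, not_lt, not_lt] at hout
  apply hn
  beta_reduce
  rcases hout with hneg | hpos
  · rw [← Module.End.mul_apply, (commute_xop_xop α x0 R1 R5a R5b a b (-n) n).eq,
      Module.End.mul_apply, xop_apply_eq_zero α x0 hu a (n := -n) (by omega) (by omega),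
      map_zero, smul_zero]
  · rw [xop_apply_eq_zero α x0 hu b (n := n) (by omega) (by omega), map_zero, smul_zero]

noncomputable def quadraticSum (a b : Fin 3) (u : V) : V :=
  ∑ᶠ n : ℤ, (n : ℂ) • xop α x0 a (-n) (xop α x0 b n u)

lemma beta_apply_quadraticSum
    (R1 : ∀ (i j : Fin 3) (m n : ℤ), ⁅α i m, α j n⁆ = 0)
    (R2 : ∀ (i j : Fin 3) (m n : ℤ), ⁅β i m, α j n⁆
      = if i = j ∧ m + n = 0 then (m : ℂ) • (1 : Module.End ℂ V) else 0)
    (R5a : ∀ (i j : Fin 3) (n : ℤ), ⁅α j n, x0 i⁆ = 0)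
    (R5b : ∀ i j : Fin 3, ⁅x0 i, x0 j⁆ = 0)
    (R6 : ∀ (i j : Fin 3) (n : ℤ), ⁅β j n, x0 i⁆
      = if i = j ∧ n = 0 then (1 : Module.End ℂ V) else 0)
    (hα : ∀ u : V, ∃ N : ℤ, ∀ c n, N ≤ n → α c n u = 0) (a b j : Fin 3) (m : ℤ) (u : V) :
    β j m (quadraticSum α x0 a b u) = quadraticSum α x0 a b (β j m u)
      + ((if a = j then (m : ℂ) • xop α x0 b m u else 0)
        - if b = j then (m : ℂ) • xop α x0 a m u else 0) := by
  have hfin (w : V) := (hα w).elim fun N hN =>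
    hasFiniteSupport_smul_xop_xop α x0 R1 R5a R5b hN a b
  set D₁ : ℤ → V := fun n => (n : ℂ) • (if a = j ∧ m + -n = 0 then xop α x0 b n u else 0)
  set D₂ : ℤ → V := fun n => (n : ℂ) • xop α x0 a (-n) (if b = j ∧ m + n = 0 then u else 0)
  have hD₁ : ∀ n ≠ m, D₁ n = 0 := fun n hn => by simp [D₁, show m + -n ≠ 0 by omega]
  have hD₂ : ∀ n ≠ -m, D₂ n = 0 := fun n hn => by simp [D₂, show m + n ≠ 0 by omega]
  have hterm (n : ℤ) : β j m ((n : ℂ) • xop α x0 a (-n) (xop α x0 b n u))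
      = (n : ℂ) • xop α x0 a (-n) (xop α x0 b n (β j m u)) + (D₁ n + D₂ n) := by
    rw [map_smul, beta_apply_xop α β x0 R2 R6, beta_apply_xop α β x0 R2 R6, map_add, smul_add,
      smul_add]
    abel
  have hD₁fin := hasFiniteSupport_of_eq_zero_of_ne m hD₁
  have hD₂fin := hasFiniteSupport_of_eq_zero_of_ne (-m) hD₂
  unfold quadraticSum
  rw [map_finsum _ (hfin u), finsum_congr hterm,
    finsum_add_distrib (hfin _) (show HasFiniteSupport fun n => D₁ n + D₂ n from hD₁fin.add hD₂fin),
    finsum_add_distrib hD₁fin hD₂fin,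
    finsum_eq_single _ m hD₁, finsum_eq_single _ (-m) hD₂]
  congr 1
  split_ifs <;> simp [D₁, D₂, *]

lemma Pop_eq (i : Fin 3) (v : V) :
    Pop α β x0 i v = β i 0 v + (∑ a : Fin 3, ∑ b : Fin 3, eps i a b • x0 a (α b 0 v))
      - (2 : ℂ)⁻¹ • ∑ a : Fin 3, ∑ b : Fin 3, eps i a b • quadraticSum α x0 a b v :=
  rfl

lemma beta_apply_beta_zero
    (R3 : ∀ (i j : Fin 3) (m n : ℤ), ⁅β i m, β j n⁆ = ∑ k : Fin 3, eps i j k • α k (m + n))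
    (i j : Fin 3) (m : ℤ) (v : V) :
    β j m (β i 0 v) = β i 0 (β j m v) + ∑ k : Fin 3, eps j i k • α k m v := by
  simp [apply_apply_of_lie_eq (R3 j i m 0)]

lemma beta_apply_x0_alpha_zero
    (R2 : ∀ (i j : Fin 3) (m n : ℤ), ⁅β i m, α j n⁆
      = if i = j ∧ m + n = 0 then (m : ℂ) • (1 : Module.End ℂ V) else 0)
    (R6 : ∀ (i j : Fin 3) (n : ℤ), ⁅β j n, x0 i⁆
      = if i = j ∧ n = 0 then (1 : Module.End ℂ V) else 0) (a b j : Fin 3) (m : ℤ) (v : V) :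
    β j m (x0 a (α b 0 v)) = x0 a (α b 0 (β j m v)) + if a = j ∧ m = 0 then α b 0 v else 0 := by
  rw [apply_apply_of_lie_eq (R6 a j m), apply_apply_of_lie_eq (R2 j b m 0)]
  split_ifs <;> simp_all

lemma beta_apply_Pop_sub_Pop_apply_beta
    (R1 : ∀ (i j : Fin 3) (m n : ℤ), ⁅α i m, α j n⁆ = 0)
    (R2 : ∀ (i j : Fin 3) (m n : ℤ), ⁅β i m, α j n⁆
      = if i = j ∧ m + n = 0 then (m : ℂ) • (1 : Module.End ℂ V) else 0)
    (R3 : ∀ (i j : Fin 3) (m n : ℤ), ⁅β i m, β j n⁆ = ∑ k : Fin 3, eps i j k • α k (m + n))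
    (R5a : ∀ (i j : Fin 3) (n : ℤ), ⁅α j n, x0 i⁆ = 0)
    (R5b : ∀ i j : Fin 3, ⁅x0 i, x0 j⁆ = 0)
    (R6 : ∀ (i j : Fin 3) (n : ℤ), ⁅β j n, x0 i⁆
      = if i = j ∧ n = 0 then (1 : Module.End ℂ V) else 0)
    (hα : ∀ u : V, ∃ N : ℤ, ∀ c n, N ≤ n → α c n u = 0) (i j : Fin 3) (m : ℤ) (v : V) :
    β j m (Pop α β x0 i v) - Pop α β x0 i (β j m v)
      = ∑ k : Fin 3, eps j i k • α k m v
        + ∑ k : Fin 3, eps i j k • ((if m = 0 then α k 0 v else 0) - (m : ℂ) • xop α x0 k m v) := by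
  simp only [Pop_eq, map_add, map_sub, map_sum, map_zsmul, map_smul, beta_apply_beta_zero α β R3,
    beta_apply_x0_alpha_zero α β x0 R2 R6, beta_apply_quadraticSum α β x0 R1 R2 R5a R5b R6 hα,
    smul_add, Finset.sum_add_distrib, two_inv_smul_sum_eps_smul_ite_sub_ite]
  simp only [ite_and, smul_ite, smul_zero, Finset.sum_ite_irrel, Finset.sum_const_zero,
    Finset.sum_ite_eq', Finset.mem_univ, if_true, smul_sub, Finset.sum_sub_distrib]
  abel

lemma ite_sub_smul_xop_apply (c : Fin 3) (m : ℤ) (u : V) :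
    (if m = 0 then α c 0 u else 0) - (m : ℂ) • xop α x0 c m u = α c m u := by
  by_cases hm : m = 0
  · simp [hm]
  · simp [xop, hm, smul_smul]

end Relations

/-- `[β_{j,m}, P_i] = 0` (as endomorphisms, checked pointwise). -/
theorem beta_P_commutator
    (α β : Fin 3 → ℤ → Module.End ℂ V) (x0 : Fin 3 → Module.End ℂ V)
    (R1 : ∀ (i j : Fin 3) (m n : ℤ), ⁅α i m, α j n⁆ = 0)
    (R2 : ∀ (i j : Fin 3) (m n : ℤ), ⁅β i m, α j n⁆
      = if i = j ∧ m + n = 0 then (m : ℂ) • (1 : Module.End ℂ V) else 0)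
    (R3 : ∀ (i j : Fin 3) (m n : ℤ), ⁅β i m, β j n⁆ = ∑ k : Fin 3, eps i j k • α k (m + n))
    (R4 : ∀ v : V, ∃ N : ℤ, ∀ (i : Fin 3) (n : ℤ), N ≤ n → α i n v = 0 ∧ β i n v = 0)
    (R5a : ∀ (i j : Fin 3) (n : ℤ), ⁅α j n, x0 i⁆ = 0)
    (R5b : ∀ i j : Fin 3, ⁅x0 i, x0 j⁆ = 0)
    (R6 : ∀ (i j : Fin 3) (n : ℤ), ⁅β j n, x0 i⁆
      = if i = j ∧ n = 0 then (1 : Module.End ℂ V) else 0)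
    (i j : Fin 3) (m : ℤ) (v : V) :
    (β j m) (Pop α β x0 i v) - Pop α β x0 i ((β j m) v) = 0 := by
  have hα : ∀ u : V, ∃ N : ℤ, ∀ c n, N ≤ n → α c n u = 0 :=
    fun u => (R4 u).imp fun _ hN c n hn => (hN c n hn).1
  rw [beta_apply_Pop_sub_Pop_apply_beta α β x0 R1 R2 R3 R5a R5b R6 hα]
  simp only [ite_sub_smul_xop_apply, ← Finset.sum_add_distrib, eps_swap_left j i, neg_smul,
    neg_add_cancel, Finset.sum_const_zero]
end
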